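/- arXiv:2303.07443 — 5 statements merged into one kernel-verified Lean document; each statement's English description precedes it below -/
import Mathlib

section
/- A group G is left-orderable if and only if for every finite subset {x₁, …, xₙ} of G not containing the identity element, there exist ε₁, …, εₙ ∈ {−1, 1} such that the subsemigroup of G generated by x₁^{ε₁}, …, xₙ^{εₙ} does not contain the identity element of G. -/
open Filter Topology Set

/-- A group is left-orderable if it admits a linear order invariant under
left multiplication: `g ≺ h` implies `f * g ≺ f * h`. -/
def IsLeftOrderable (G : Type*) [Group G] : Prop :=
  ∃ r : LinearOrder G, ∀ f g h : G, r.lt g h → r.lt (f * g) (f * h)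

/-! Left orders correspond to positive cones: subsemigroups `P` with `1 ∉ P` and
`G \ {1} ⊆ P ∪ P⁻¹`. Choosing each sign so that `xᵢ ^ εᵢ ∈ P` gives one direction. Conversely,
the criterion yields for every finite set a subsemigroup avoiding `1` that contains each
nonidentity element of the set or its inverse; the elements lying in almost all of these
subsemigroups, along an ultrafilter on the finite subsets of `G` refining `atTop`, form a
positive cone (a compactness argument). -/

structure Subsemigroup.IsPositiveCone {G : Type*} [Group G] (P : Subsemigroup G) : Prop where
  one_notMem : (1 : G) ∉ P
  mem_or_inv_mem : ∀ g : G, g ≠ 1 → g ∈ P ∨ g⁻¹ ∈ P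

def Subsemigroup.eventually {ι M : Type*} [Mul M] (l : Filter ι) (S : ι → Subsemigroup M) :
    Subsemigroup M where
  carrier := {g | ∀ᶠ i in l, g ∈ S i}
  mul_mem' ha hb := (ha.and hb).mono fun _ h => mul_mem h.1 h.2

theorem Subsemigroup.mem_eventually {ι M : Type*} [Mul M] {l : Filter ι}
    {S : ι → Subsemigroup M} {g : M} : g ∈ Subsemigroup.eventually l S ↔ ∀ᶠ i in l, g ∈ S i :=
  Iff.rfl

namespace Subsemigroup.IsPositiveCone

variable {G : Type*} [Group G] {P : Subsemigroup G}

/-- `g < h ↔ g⁻¹ * h ∈ P` is a left-invariant linear order. -/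
theorem isLeftOrderable (hP : P.IsPositiveCone) : IsLeftOrderable G := by
  classical
  let r : G → G → Prop := fun g h => g⁻¹ * h ∈ P
  have : IsStrictTotalOrder G r :=
    { irrefl := fun g => by simpa [r] using hP.one_notMem
      trans := fun a b c hab hbc => by simpa [r, mul_assoc] using P.mul_mem hab hbc
      trichotomous := fun a b hab hba => by
        by_contra hne
        have hab_ne : a⁻¹ * b ≠ 1 := fun h => hne (inv_mul_eq_one.mp h)
        rcases hP.mem_or_inv_mem _ hab_ne with h | h
        · exact hab h
        · exact hba (by simpa [r] using h) }
  refine ⟨linearOrderOfSTO r, fun f g h hgh => ?_⟩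
  have hgh : g⁻¹ * h ∈ P := hgh
  show (f * g)⁻¹ * (f * h) ∈ P
  simpa [mul_assoc] using hgh

theorem exists_signs_closure_le (hP : P.IsPositiveCone) {ι : Type*} (x : ι → G)
    (hx : ∀ i, x i ≠ 1) :
    ∃ ε : ι → ℤ, (∀ i, ε i = 1 ∨ ε i = -1) ∧
      Subsemigroup.closure (Set.range fun i => x i ^ ε i) ≤ P := by
  classical
  refine ⟨fun i => if x i ∈ P then 1 else -1, fun i => by dsimp only; split_ifs <;> simp, ?_⟩
  rw [Subsemigroup.closure_le]
  rintro _ ⟨i, rfl⟩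
  by_cases hi : x i ∈ P
  · simp [hi]
  · simpa [hi] using (hP.mem_or_inv_mem _ (hx i)).resolve_left hi

end Subsemigroup.IsPositiveCone

theorem exists_isPositiveCone_of_isLeftOrderable {G : Type*} [Group G]
    (hG : IsLeftOrderable G) : ∃ P : Subsemigroup G, P.IsPositiveCone := by
  obtain ⟨r, hr⟩ := hG
  let _ := r
  let P : Subsemigroup G :=
    { carrier := {g | 1 < g}
      mul_mem' := fun {a b} ha hb => ha.trans (by simpa using hr a 1 b hb) }
  refine ⟨P, ?_, ?_⟩
  · exact lt_irrefl (1 : G)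
  · intro g hg
    rcases lt_or_gt_of_ne hg with h | h
    · exact Or.inr (by simpa using hr g⁻¹ g 1 h : (1 : G) < g⁻¹)
    · exact Or.inl h

theorem isLeftOrderable_iff_exists_isPositiveCone {G : Type*} [Group G] :
    IsLeftOrderable G ↔ ∃ P : Subsemigroup G, P.IsPositiveCone :=
  ⟨exists_isPositiveCone_of_isLeftOrderable, fun ⟨_, hP⟩ => hP.isLeftOrderable⟩

theorem mem_or_inv_mem_closure_range_zpow {G ι : Type*} [Group G] (x : ι → G) {ε : ι → ℤ}
    (hε : ∀ i, ε i = 1 ∨ ε i = -1) (i : ι) :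
    x i ∈ Subsemigroup.closure (Set.range fun i => x i ^ ε i) ∨
      (x i)⁻¹ ∈ Subsemigroup.closure (Set.range fun i => x i ^ ε i) := by
  have hmem := Subsemigroup.subset_closure (Set.mem_range_self (f := fun i => x i ^ ε i) i)
  rcases hε i with h | h <;> simp only [h, zpow_one, zpow_neg] at hmem
  exacts [Or.inl hmem, Or.inr hmem]

theorem exists_isPositiveCone_of_forall_finset {G : Type*} [Group G]
    (h : ∀ s : Finset G, ∃ S : Subsemigroup G,
      (1 : G) ∉ S ∧ ∀ g ∈ s, g ≠ 1 → g ∈ S ∨ g⁻¹ ∈ S) :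
    ∃ P : Subsemigroup G, P.IsPositiveCone := by
  choose S hS_one hS_mem using h
  let U : Ultrafilter (Finset G) := Ultrafilter.of atTop
  have eventually_mem (g : G) : ∀ᶠ s in (U : Filter (Finset G)), g ∈ s :=
    Filter.Eventually.mono (Ultrafilter.of_le atTop (eventually_ge_atTop {g}))
      fun _ => Finset.singleton_subset_iff.mp
  refine ⟨Subsemigroup.eventually U S, fun h1 => ?_, fun g hg => ?_⟩
  · obtain ⟨s, hs⟩ := Subsemigroup.mem_eventually.mp h1 |>.exists
    exact hS_one s hs
  · simp only [Subsemigroup.mem_eventually, ← Ultrafilter.eventually_or]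
    exact (eventually_mem g).mono fun s hs => hS_mem s g hs hg

/-- A group `G` is left-orderable iff for every finite subset `{x₁, …, xₙ}` of
`G` not containing the identity, there are signs `εᵢ ∈ {−1, 1}` such that the
subsemigroup generated by `x₁ ^ ε₁, …, xₙ ^ εₙ` does not contain the identity. -/
theorem isLeftOrderable_iff_semigroup_criterion {G : Type*} [Group G] :
    IsLeftOrderable G ↔
      ∀ (n : ℕ) (x : Fin n → G), (∀ i, x i ≠ 1) →
        ∃ ε : Fin n → ℤ, (∀ i, ε i = 1 ∨ ε i = -1) ∧
          (1 : G) ∉ Subsemigroup.closure (Set.range fun i => x i ^ ε i) := by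
  rw [isLeftOrderable_iff_exists_isPositiveCone]
  constructor
  · rintro ⟨P, hP⟩ n x hx
    obtain ⟨ε, hε, hle⟩ := hP.exists_signs_closure_le x hx
    exact ⟨ε, hε, fun h1 => hP.one_notMem (hle h1)⟩
  · intro H
    refine exists_isPositiveCone_of_forall_finset fun s => ?_
    classical
    let t := s.filter (· ≠ 1)
    let x : Fin t.card → G := fun i => t.equivFin.symm i
    obtain ⟨ε, hε, hone⟩ := H t.card x fun i => (Finset.mem_filter.mp (t.equivFin.symm i).2).2
    refine ⟨_, hone, fun g hgs hg1 => ?_⟩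
    have hgt : g ∈ t := Finset.mem_filter.mpr ⟨hgs, hg1⟩
    simpa [x] using mem_or_inv_mem_closure_range_zpow x hε (t.equivFin ⟨g, hgt⟩)
end

section
/- Let G be a countable group. Then G is left-orderable if and only if there exists an injective group homomorphism h : G → Homeo₊(ℝ); that is, if and only if G acts faithfully on the real line by orientation-preserving homeomorphisms. -/
open Filter Topology Set

def HomeoPlusReal : Subgroup (Equiv.Perm ℝ) where
  carrier := {f | Continuous f ∧ Continuous f.symm ∧ StrictMono f}
  one_mem' := by
    refine ⟨continuous_id, ?_, fun a b h => h⟩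
    exact continuous_id
  mul_mem' := by
    rintro a b ⟨ha1, ha2, ha3⟩ ⟨hb1, hb2, hb3⟩
    refine ⟨?_, ?_, ?_⟩
    · simpa [Equiv.Perm.coe_mul] using ha1.comp hb1
    · have : Continuous (⇑b.symm ∘ ⇑a.symm) := hb2.comp ha2
      simpa [Equiv.Perm.mul_def, Equiv.symm_trans_apply, Function.comp] using this
    · intro x y h
      simpa [Equiv.Perm.coe_mul] using ha3 (hb3 h)
  inv_mem' := by
    rintro a ⟨ha1, ha2, ha3⟩
    refine ⟨by simpa using ha2, by exact ha1, ?_⟩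
    intro x y h
    have h2 := ha3.lt_iff_lt (a := a.symm x) (b := a.symm y)
    simp only [Equiv.apply_symm_apply] at h2
    simpa using h2.mp h

/-!
A left order on `G` makes `G` act faithfully on `G ×ₗ ℚ` by the order automorphisms
`(a, q) ↦ (g * a, q)`. For countable `G` this lexicographic product is a countable dense order
without endpoints, hence isomorphic to `ℚ` by Cantor's back-and-forth theorem, and every order
automorphism of `ℚ` extends to one of `ℝ`.

Conversely, an increasing bijection of `ℝ` is determined by its values on an enumeration
`q₀, q₁, …` of `ℚ`; comparing two such maps at the first `qₙ` where they differ is a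
left-invariant order.
-/

open Function

theorem IsLeftOrderable.of_injective {G H : Type*} [Group G] [Group H] (φ : G →* H)
    (hφ : Injective φ) (hH : IsLeftOrderable H) : IsLeftOrderable G := by
  obtain ⟨r, hr⟩ := hH
  exact ⟨@LinearOrder.lift' G H r φ hφ, fun f g g' h => by
    show r.lt (φ (f * g)) (φ (f * g'))
    simpa only [map_mul] using hr (φ f) _ _ h⟩

theorem isLeftOrderable_of_strictMono_smul {G X ι : Type*} [Group G] [LinearOrder X]
    [MulAction G X] [LinearOrder ι] [WellFoundedLT ι]
    (hmono : ∀ g : G, StrictMono fun x : X => g • x) (s : ι → X)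
    (hs : ∀ g : G, (∀ i, g • s i = s i) → g = 1) : IsLeftOrderable G := by
  let Φ : G → Lex (ι → X) := fun g => toLex fun i => g • s i
  have hΦ : Injective Φ := fun a b hab => by
    have hfix : ∀ i, (b⁻¹ * a) • s i = s i := fun i => by
      rw [mul_smul, inv_smul_eq_iff]
      exact congrFun hab i
    exact (inv_mul_eq_one.1 (hs _ hfix)).symm
  refine ⟨LinearOrder.lift' Φ hΦ, fun f g g' hlt => ?_⟩
  obtain ⟨i, hagree, hlt⟩ : ∃ i, (∀ j < i, g • s j = g' • s j) ∧ g • s i < g' • s i := hlt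
  exact ⟨i, fun j hj => by simp only [Φ, Pi.toLex_apply, mul_smul, hagree j hj],
    by simpa only [Φ, Pi.toLex_apply, mul_smul] using hmono f hlt⟩

theorem StrictMono.eq_id_of_forall_rat {f : ℝ → ℝ} (hf : StrictMono f)
    (h : ∀ q : ℚ, f q = q) : f = id :=
  funext fun x => eq_of_forall_rat_lt_iff_lt fun q => by
    simpa [h q] using hf.lt_iff_lt (a := q) (b := x)

theorem OrderIso.ext_rat {e₁ e₂ : ℝ ≃o ℝ} (h : ∀ q : ℚ, e₁ q = e₂ q) : e₁ = e₂ := by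
  have hid := (e₂.symm.strictMono.comp e₁.strictMono).eq_id_of_forall_rat fun q => by
    simp [h q]
  ext x
  simpa using congrArg e₂ (congrFun hid x)

namespace OrderIso

variable (φ : ℚ ≃o ℚ)

noncomputable def ratExtendFun (x : ℝ) : ℝ :=
  ⨆ q : {q : ℚ // (q : ℝ) ≤ x}, (φ q : ℝ)

variable {φ}

theorem cast_apply_le_cast_apply {p q : ℚ} (h : (p : ℝ) ≤ q) : (φ p : ℝ) ≤ φ q :=
  Rat.cast_le.2 (φ.monotone (Rat.cast_le.1 h))

theorem le_ratExtendFun {q : ℚ} {x : ℝ} (hq : (q : ℝ) ≤ x) : (φ q : ℝ) ≤ ratExtendFun φ x := by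
  obtain ⟨p, hp⟩ := exists_rat_gt x
  refine le_ciSup (f := fun q : {q : ℚ // (q : ℝ) ≤ x} => (φ q : ℝ)) ⟨φ p, ?_⟩ ⟨q, hq⟩
  exact Set.forall_mem_range.2 fun r => cast_apply_le_cast_apply (r.2.trans hp.le)

theorem ratExtendFun_le {q : ℚ} {x : ℝ} (hq : x ≤ q) : ratExtendFun φ x ≤ φ q := by
  obtain ⟨p, hp⟩ := exists_rat_lt x
  have : Nonempty {q : ℚ // (q : ℝ) ≤ x} := ⟨⟨p, hp.le⟩⟩
  exact ciSup_le fun r => cast_apply_le_cast_apply (r.2.trans hq)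

theorem ratExtendFun_ratCast (q : ℚ) : ratExtendFun φ q = φ q :=
  le_antisymm (ratExtendFun_le le_rfl) (le_ratExtendFun le_rfl)

theorem ratExtendFun_strictMono : StrictMono (ratExtendFun φ) := by
  intro x y hxy
  obtain ⟨p, hxp, hpy⟩ := exists_rat_btwn hxy
  obtain ⟨q, hpq, hqy⟩ := exists_rat_btwn hpy
  calc ratExtendFun φ x ≤ φ p := ratExtendFun_le hxp.le
    _ < φ q := by exact_mod_cast φ.strictMono (by exact_mod_cast hpq)
    _ ≤ ratExtendFun φ y := le_ratExtendFun hqy.le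

theorem ratExtendFun_ratExtendFun_symm (x : ℝ) : ratExtendFun φ (ratExtendFun φ.symm x) = x := by
  have hid : ratExtendFun φ ∘ ratExtendFun φ.symm = id :=
    (ratExtendFun_strictMono.comp ratExtendFun_strictMono).eq_id_of_forall_rat fun q => by
      simp [ratExtendFun_ratCast]
  exact congrFun hid x

variable (φ)

noncomputable def ratExtend : ℝ ≃o ℝ :=
  ratExtendFun_strictMono.orderIsoOfRightInverse _ (ratExtendFun φ.symm)
    ratExtendFun_ratExtendFun_symm

@[simp]
theorem ratExtend_ratCast (q : ℚ) : ratExtend φ q = φ q := ratExtendFun_ratCast q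

noncomputable def ratExtendHom : (ℚ ≃o ℚ) →* (ℝ ≃o ℝ) where
  toFun := ratExtend
  map_one' := ext_rat fun q => by simp
  map_mul' φ ψ := ext_rat fun q => by simp [RelIso.mul_apply]

theorem ratExtendHom_injective : Injective ratExtendHom := fun φ ψ h => by
  ext q
  have : ratExtend φ q = ratExtend ψ q := congrArg (· (q : ℝ)) h
  simpa using this

end OrderIso

def OrderIso.toHomeoPlusReal : (ℝ ≃o ℝ) →* HomeoPlusReal where
  toFun e := ⟨e.toEquiv, e.continuous, e.symm.continuous, e.strictMono⟩
  map_one' := rfl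
  map_mul' _ _ := rfl

theorem OrderIso.toHomeoPlusReal_injective : Injective OrderIso.toHomeoPlusReal :=
  fun _ _ h => OrderIso.ext (congrArg (fun f : HomeoPlusReal => ⇑(f : Equiv.Perm ℝ)) h)

theorem isLeftOrderable_homeoPlusReal : IsLeftOrderable HomeoPlusReal := by
  refine isLeftOrderable_of_strictMono_smul (fun f => f.2.2.2)
    (fun n : ℕ => (((Denumerable.eqv ℚ).symm n : ℚ) : ℝ)) fun f hf => ?_
  have hid : ⇑(f : Equiv.Perm ℝ) = id := f.2.2.2.eq_id_of_forall_rat fun q => by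
    simpa only [Equiv.symm_apply_apply, Subgroup.smul_def, Equiv.Perm.smul_def]
      using hf (Denumerable.eqv ℚ q)
  exact Subtype.ext (Equiv.ext (congrFun hid))

def OrderIso.conjMulEquiv {α β : Type*} [Preorder α] [Preorder β] (e : α ≃o β) :
    (α ≃o α) ≃* (β ≃o β) where
  toFun f := e.symm.trans (f.trans e)
  invFun f := e.trans (f.trans e.symm)
  left_inv f := by ext; simp
  right_inv f := by ext; simp
  map_mul' f g := by ext; simp [RelIso.mul_apply]

def mulLeftProdLexHom (G β : Type*) [Group G] [LinearOrder G] [MulLeftMono G] [Preorder β] :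
    G →* (G ×ₗ β ≃o G ×ₗ β) where
  toFun g := Prod.Lex.prodLexCongr (OrderIso.mulLeft g) (OrderIso.refl β)
  map_one' := by ext; simp [Prod.map]
  map_mul' g h := by ext; simp [Prod.map, RelIso.mul_apply, mul_assoc]

@[simp]
theorem mulLeftProdLexHom_apply {G β : Type*} [Group G] [LinearOrder G] [MulLeftMono G]
    [Preorder β] (g a : G) (b : β) : mulLeftProdLexHom G β g (toLex (a, b)) = toLex (g * a, b) :=
  rfl

theorem mulLeftProdLexHom_injective (G β : Type*) [Group G] [LinearOrder G] [MulLeftMono G]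
    [Preorder β] [Nonempty β] : Injective (mulLeftProdLexHom G β) := by
  intro g h hgh
  obtain ⟨b⟩ := ‹Nonempty β›
  simpa using congrArg (fun p => (ofLex p).1) (DFunLike.congr_fun hgh (toLex (1, b)))

theorem exists_injective_hom_orderIso_rat (G : Type*) [Group G] [Countable G] [LinearOrder G]
    [MulLeftMono G] : ∃ ρ : G →* (ℚ ≃o ℚ), Injective ρ := by
  have : Countable (G ×ₗ ℚ) := inferInstanceAs (Countable (G × ℚ))
  have : Nonempty (G ×ₗ ℚ) := ⟨toLex (1, 0)⟩
  obtain ⟨e⟩ := Order.iso_of_countable_dense (G ×ₗ ℚ) ℚ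
  exact ⟨e.conjMulEquiv.toMonoidHom.comp (mulLeftProdLexHom G ℚ),
    e.conjMulEquiv.injective.comp (mulLeftProdLexHom_injective G ℚ)⟩

/-- Dynamic realization: a countable group is left-orderable iff it acts
faithfully on the real line by orientation-preserving homeomorphisms. -/
theorem isLeftOrderable_iff_faithful_action {G : Type*} [Group G] [Countable G] :
    IsLeftOrderable G ↔ ∃ h : G →* HomeoPlusReal, Function.Injective h := by
  constructor
  · rintro ⟨r, hr⟩
    let _ : LinearOrder G := r
    have : MulLeftStrictMono G := ⟨fun f _ _ h => hr f _ _ h⟩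
    have := mulLeftMono_of_mulLeftStrictMono G
    obtain ⟨ρ, hρ⟩ := exists_injective_hom_orderIso_rat G
    exact ⟨OrderIso.toHomeoPlusReal.comp (OrderIso.ratExtendHom.comp ρ),
      OrderIso.toHomeoPlusReal_injective.comp (OrderIso.ratExtendHom_injective.comp hρ)⟩
  · rintro ⟨h, hinj⟩
    exact isLeftOrderable_homeoPlusReal.of_injective h hinj
end

section
/- The group Homeo̰₊(ℝ, 0) of germs at 0 of orientation-preserving homeomorphisms of the real line fixing 0 is left-orderable. -/
open Filter Topology Set

/-- Data representing a local orientation-preserving homeomorphism of `ℝ`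
defined on an open neighborhood `U` of `0`, fixing `0`, together with a local
inverse `G` defined on the open image neighborhood `V`. -/
structure LocalHomeoAtZero where
  F : ℝ → ℝ
  G : ℝ → ℝ
  U : Set ℝ
  V : Set ℝ
  isOpen_U : IsOpen U
  isOpen_V : IsOpen V
  mem_U : (0 : ℝ) ∈ U
  mem_V : (0 : ℝ) ∈ V
  contF : ContinuousOn F U
  contG : ContinuousOn G V
  mapsF : Set.MapsTo F U V
  mapsG : Set.MapsTo G V U
  leftInv : ∀ x ∈ U, G (F x) = x
  rightInv : ∀ x ∈ V, F (G x) = x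
  mono : StrictMonoOn F U
  fixes : F 0 = 0

namespace LocalHomeoAtZero

/-- Two local homeomorphisms are identified when they agree on some
neighborhood of `0`, i.e. they have the same germ at `0`. -/
instance setoid : Setoid LocalHomeoAtZero where
  r d e := d.F =ᶠ[nhds (0 : ℝ)] e.F
  iseqv := ⟨fun _ => Filter.EventuallyEq.refl _ _,
    fun h => h.symm, fun h h' => h.trans h'⟩

lemma G_fixes (d : LocalHomeoAtZero) : d.G 0 = 0 := by
  have h := d.leftInv 0 d.mem_U
  rw [d.fixes] at h
  exact h

/-- The identity element. -/
def one : LocalHomeoAtZero where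
  F := id
  G := id
  U := Set.univ
  V := Set.univ
  isOpen_U := isOpen_univ
  isOpen_V := isOpen_univ
  mem_U := trivial
  mem_V := trivial
  contF := continuousOn_id
  contG := continuousOn_id
  mapsF := fun x _ => trivial
  mapsG := fun x _ => trivial
  leftInv := fun x _ => rfl
  rightInv := fun x _ => rfl
  mono := fun x _ y _ h => h
  fixes := rfl

/-- Composition of local homeomorphisms. -/
def comp (d e : LocalHomeoAtZero) : LocalHomeoAtZero where
  F := d.F ∘ e.F
  G := e.G ∘ d.G
  U := e.U ∩ e.F ⁻¹' d.U
  V := d.V ∩ d.G ⁻¹' e.V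
  isOpen_U := e.contF.isOpen_inter_preimage e.isOpen_U d.isOpen_U
  isOpen_V := d.contG.isOpen_inter_preimage d.isOpen_V e.isOpen_V
  mem_U := ⟨e.mem_U, by simp only [Set.mem_preimage, e.fixes]; exact d.mem_U⟩
  mem_V := ⟨d.mem_V, by simp only [Set.mem_preimage, d.G_fixes]; exact e.mem_V⟩
  contF := d.contF.comp (e.contF.mono Set.inter_subset_left) (fun x hx => hx.2)
  contG := e.contG.comp (d.contG.mono Set.inter_subset_left) (fun x hx => hx.2)
  mapsF := by
    rintro x ⟨hx1, hx2⟩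
    refine ⟨d.mapsF hx2, ?_⟩
    simp only [Set.mem_preimage, Function.comp_apply]
    rw [d.leftInv _ hx2]
    exact e.mapsF hx1
  mapsG := by
    rintro y ⟨hy1, hy2⟩
    refine ⟨e.mapsG hy2, ?_⟩
    simp only [Set.mem_preimage, Function.comp_apply]
    rw [e.rightInv _ hy2]
    exact d.mapsG hy1
  leftInv := by
    rintro x ⟨hx1, hx2⟩
    simp only [Function.comp_apply]
    rw [d.leftInv _ hx2, e.leftInv _ hx1]
  rightInv := by
    rintro y ⟨hy1, hy2⟩
    simp only [Function.comp_apply]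
    rw [e.rightInv _ hy2, d.rightInv _ hy1]
  mono := by
    rintro x ⟨hx1, hx2⟩ y ⟨hy1, hy2⟩ hxy
    exact d.mono hx2 hy2 (e.mono hx1 hy1 hxy)
  fixes := by simp only [Function.comp_apply, e.fixes, d.fixes]

/-- Inverse of a local homeomorphism. -/
def inv (d : LocalHomeoAtZero) : LocalHomeoAtZero where
  F := d.G
  G := d.F
  U := d.V
  V := d.U
  isOpen_U := d.isOpen_V
  isOpen_V := d.isOpen_U
  mem_U := d.mem_V
  mem_V := d.mem_U
  contF := d.contG
  contG := d.contF
  mapsF := d.mapsG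
  mapsG := d.mapsF
  leftInv := d.rightInv
  rightInv := d.leftInv
  mono := by
    intro x hx y hy hxy
    rcases lt_trichotomy (d.G x) (d.G y) with h | h | h
    · exact h
    · exfalso
      have : x = y := by
        rw [← d.rightInv x hx, ← d.rightInv y hy, h]
      exact absurd this (ne_of_lt hxy)
    · exfalso
      have := d.mono (d.mapsG hy) (d.mapsG hx) h
      rw [d.rightInv x hx, d.rightInv y hy] at this
      exact absurd hxy (not_lt.mpr this.le)
  fixes := d.G_fixes

lemma comp_sound {d₁ e₁ d₂ e₂ : LocalHomeoAtZero} (h₁ : d₁ ≈ e₁) (h₂ : d₂ ≈ e₂) :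
    comp d₁ d₂ ≈ comp e₁ e₂ := by
  have hc : ContinuousAt d₂.F 0 := d₂.contF.continuousAt (d₂.isOpen_U.mem_nhds d₂.mem_U)
  have ht : Tendsto d₂.F (nhds (0 : ℝ)) (nhds (0 : ℝ)) := by
    have := hc.tendsto
    rwa [d₂.fixes] at this
  have hA : d₁.F ∘ d₂.F =ᶠ[nhds (0 : ℝ)] e₁.F ∘ d₂.F := h₁.comp_tendsto ht
  have hB : e₁.F ∘ d₂.F =ᶠ[nhds (0 : ℝ)] e₁.F ∘ e₂.F := h₂.fun_comp e₁.F
  exact hA.trans hB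

lemma inv_sound {d e : LocalHomeoAtZero} (h : d ≈ e) : inv d ≈ inv e := by
  obtain ⟨s, hs, hseq⟩ := Filter.eventuallyEq_iff_exists_mem.mp h
  obtain ⟨W, hWs, hWopen, hW0⟩ := mem_nhds_iff.mp hs
  set A : Set ℝ := d.U ∩ e.U ∩ W with hA
  have hAopen : IsOpen A := (d.isOpen_U.inter e.isOpen_U).inter hWopen
  have hA0 : (0 : ℝ) ∈ A := ⟨⟨d.mem_U, e.mem_U⟩, hW0⟩
  set B : Set ℝ := d.V ∩ d.G ⁻¹' A with hB
  have hBopen : IsOpen B := d.contG.isOpen_inter_preimage d.isOpen_V hAopen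
  have hB0 : (0 : ℝ) ∈ B := ⟨d.mem_V, by simp only [Set.mem_preimage, d.G_fixes]; exact hA0⟩
  apply Filter.eventuallyEq_of_mem (hBopen.mem_nhds hB0)
  rintro y ⟨hy1, hy2⟩
  simp only [Set.mem_preimage] at hy2
  obtain ⟨⟨hxU, hxU'⟩, hxW⟩ := hy2
  show d.G y = e.G y
  have h1 : d.F (d.G y) = y := d.rightInv y hy1
  have h2 : e.F (d.G y) = y := by rw [← hseq (hWs hxW)]; exact h1
  calc d.G y = e.G (e.F (d.G y)) := (e.leftInv _ hxU').symm
    _ = e.G y := by rw [h2]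

end LocalHomeoAtZero

/-- The group of germs at `0` of orientation-preserving local homeomorphisms of `ℝ`
fixing `0`, under composition of germs. -/
def GermHomeoPlus : Type := Quotient LocalHomeoAtZero.setoid

namespace GermHomeoPlus

instance : Group GermHomeoPlus where
  mul := Quotient.map₂ LocalHomeoAtZero.comp
    (fun _ _ h₁ _ _ h₂ => LocalHomeoAtZero.comp_sound h₁ h₂)
  one := ⟦LocalHomeoAtZero.one⟧
  inv := Quotient.map LocalHomeoAtZero.inv (fun _ _ h => LocalHomeoAtZero.inv_sound h)
  mul_assoc a b c := by
    induction a using Quotient.ind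
    induction b using Quotient.ind
    induction c using Quotient.ind
    exact Quotient.sound (Filter.EventuallyEq.refl _ _)
  one_mul a := by
    induction a using Quotient.ind
    exact Quotient.sound (Filter.EventuallyEq.refl _ _)
  mul_one a := by
    induction a using Quotient.ind
    exact Quotient.sound (Filter.EventuallyEq.refl _ _)
  inv_mul_cancel a := by
    induction a using Quotient.ind
    rename_i d
    apply Quotient.sound
    apply Filter.eventuallyEq_of_mem (d.isOpen_U.mem_nhds d.mem_U)
    intro x hx
    exact d.leftInv x hx

end GermHomeoPlus

section Navas

open Filter

noncomputable def Uf : Ultrafilter ℕ := Ultrafilter.of atTop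

lemma Uf_le : (Uf : Filter ℕ) ≤ atTop := Ultrafilter.of_le _

lemma eventually_Uf {p : ℕ → Prop} (h : ∀ᶠ n in atTop, p n) :
    ∀ᶠ n in (Uf : Filter ℕ), p n := Uf_le h

/-- The ultraproduct `ℝ^ℕ / Uf`. -/
abbrev Om : Type := Filter.Germ (Uf : Filter ℕ) ℝ

/-- Sequences of reals tending to `0` (a structure, so that it carries no order
instances inherited from the function space). -/
structure SeqZ : Type where
  seq : ℕ → ℝ
  tend : Tendsto seq atTop (𝓝 (0 : ℝ))

namespace LocalHomeoAtZero

lemma contAtZero (d : LocalHomeoAtZero) : Tendsto d.F (𝓝 (0 : ℝ)) (𝓝 (0 : ℝ)) := by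
  have h := (d.contF.continuousAt (d.isOpen_U.mem_nhds d.mem_U)).tendsto
  rwa [d.fixes] at h

lemma tendsto_comp (d : LocalHomeoAtZero) (a : SeqZ) :
    Tendsto (d.F ∘ a.seq) atTop (𝓝 (0 : ℝ)) :=
  d.contAtZero.comp a.tend

/-- Transfer of strict inequality of germs of sequences tending to `0` under a local
homeomorphism. -/
lemma germ_lt (d : LocalHomeoAtZero) {a b : ℕ → ℝ}
    (ha : Tendsto a atTop (𝓝 (0 : ℝ))) (hb : Tendsto b atTop (𝓝 (0 : ℝ)))
    (h : (↑a : Om) < ↑b) : (↑(d.F ∘ a) : Om) < ↑(d.F ∘ b) := by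
  rw [Filter.Germ.coe_lt] at h ⊢
  have hUa : ∀ᶠ n in (Uf : Filter ℕ), a n ∈ d.U :=
    eventually_Uf (ha.eventually (d.isOpen_U.mem_nhds d.mem_U))
  have hUb : ∀ᶠ n in (Uf : Filter ℕ), b n ∈ d.U :=
    eventually_Uf (hb.eventually (d.isOpen_U.mem_nhds d.mem_U))
  filter_upwards [h, hUa, hUb] with n h1 h2 h3
  exact d.mono h2 h3 h1

lemma germ_eq (d : LocalHomeoAtZero) {a b : ℕ → ℝ}
    (h : (↑a : Om) = ↑b) : (↑(d.F ∘ a) : Om) = ↑(d.F ∘ b) := by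
  rw [Filter.Germ.coe_eq] at h ⊢
  filter_upwards [h] with n h1
  simp [Function.comp, h1]

end LocalHomeoAtZero

namespace GermHomeoPlus

/-- The action of a germ on an ultraproduct class of a sequence tending to `0`. -/
noncomputable def Phi : GermHomeoPlus → SeqZ → Om :=
  Quotient.lift (fun d a => (↑(d.F ∘ a.seq) : Om)) (by
    intro d e h
    funext a
    rw [Filter.Germ.coe_eq]
    exact (h.comp_tendsto a.tend).filter_mono Uf_le)

lemma Phi_mk (d : LocalHomeoAtZero) (a : SeqZ) :
    Phi (Quotient.mk LocalHomeoAtZero.setoid d) a = (↑(d.F ∘ a.seq) : Om) := rfl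

lemma Phi_injective : Function.Injective Phi := by
  intro f g hfg
  induction f using Quotient.ind
  induction g using Quotient.ind
  rename_i d e
  by_contra hne
  have hne' : ¬ (d.F =ᶠ[𝓝 (0 : ℝ)] e.F) := fun h => hne (Quotient.sound h)
  have hfreq : ∃ᶠ x in 𝓝 (0 : ℝ), d.F x ≠ e.F x := Filter.not_eventually.mp hne'
  have hchoice : ∀ n : ℕ, ∃ x : ℝ, |x| < 1 / (n + 1 : ℝ) ∧ d.F x ≠ e.F x := by
    intro n
    have hball : ∀ᶠ x in 𝓝 (0 : ℝ), |x| < 1 / (n + 1 : ℝ) := by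
      have hpos : (0 : ℝ) < 1 / (n + 1 : ℝ) := by positivity
      have := Metric.ball_mem_nhds (0 : ℝ) hpos
      filter_upwards [this] with x hx
      simpa [Real.dist_eq] using hx
    obtain ⟨x, hx1, hx2⟩ := (hfreq.and_eventually hball).exists
    exact ⟨x, hx2, hx1⟩
  choose a ha1 ha2 using hchoice
  have haT : Tendsto a atTop (𝓝 (0 : ℝ)) := by
    apply squeeze_zero_norm (fun n => (ha1 n).le)
    exact tendsto_one_div_add_atTop_nhds_zero_nat
  have := congrFun hfg ⟨a, haT⟩
  rw [Phi_mk, Phi_mk, Filter.Germ.coe_eq] at this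
  obtain ⟨n, hn⟩ := this.exists
  exact ha2 n hn

end GermHomeoPlus

end Navas
/-- Navas's theorem: the group `Homeo̰₊(ℝ, 0)` of germs at `0` of
orientation-preserving homeomorphisms of the real line fixing `0` is
left-orderable. -/
theorem germHomeoPlus_isLeftOrderable : IsLeftOrderable GermHomeoPlus := by
  classical
  obtain ⟨lo, wf⟩ := exists_wellOrder SeqZ
  letI := lo
  haveI := wf
  set Psi : GermHomeoPlus → Lex (SeqZ → Om) := fun f => toLex (GermHomeoPlus.Phi f) with hPsi
  have hinj : Function.Injective Psi := fun f g h =>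
    GermHomeoPlus.Phi_injective (by simpa [hPsi] using h)
  refine ⟨LinearOrder.lift' Psi hinj, ?_⟩
  intro f g h hlt
  change Psi g < Psi h at hlt
  change Psi (f * g) < Psi (f * h)
  induction f using Quotient.ind
  induction g using Quotient.ind
  induction h using Quotient.ind
  rename_i c d e
  obtain ⟨i, hbefore, hi⟩ := hlt
  refine ⟨i, ?_, ?_⟩
  · intro j hj
    have hj' := hbefore j hj
    exact c.germ_eq hj'
  · exact c.germ_lt (d.tendsto_comp i) (e.tendsto_comp i) hi
end

section
/- Let G be a countable group. If G admits a group homomorphism with nontrivial image into the group Homeo̰₊(ℝ, 0) of germs at 0 of orientation-preserving homeomorphisms of ℝ fixing 0, then G admits a group homomorphism with nontrivial image into Homeo₊(ℝ). -/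
open Filter Topology Set

/-!
A nontrivial germ `φ g₀` moves points arbitrarily close to `0`, so some ultrafilter `U`
converging to `0` contains `{x | φ g₀ x ≠ x}`. Comparing representatives pointwise along `U`
gives a map `T` from `G` to the linearly ordered ultrapower `ℝ^U` with `T g₀ ≠ T 1`, and `T` is
left-invariant (`T h ≤ T h'` implies `T (g h) ≤ T (g h')`) because germs are increasing near `0`.
So `G` acts by order automorphisms on the countable linear order `T(G)`, nontrivially. Replacing
each point by a copy of `ℚ` gives a countable dense order without endpoints, i.e. `ℚ` by Cantor's
theorem, and order automorphisms of `ℚ` extend uniquely to increasing homeomorphisms of `ℝ`.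
-/

theorem Monotone.eq_of_forall_rat_eq {f f' : ℝ → ℝ} (hf : Monotone f) (hf' : Monotone f')
    (h : ∀ q : ℚ, f q = f' q) (hd : DenseRange fun q : ℚ => f q) : f = f' := by
  have le_of_agree : ∀ {f f' : ℝ → ℝ}, Monotone f → Monotone f' → (∀ q : ℚ, f q = f' q) →
      DenseRange (fun q : ℚ => f q) → ∀ x, f x ≤ f' x := by
    intro f f' hf hf' h hd x
    by_contra! hlt
    obtain ⟨q, hq₁, hq₂⟩ := hd.exists_mem_open isOpen_Ioo (nonempty_Ioo.2 hlt)
    rcases le_or_gt (q : ℝ) x with hqx | hxq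
    · exact (h q ▸ hq₁).not_ge (hf' hqx)
    · exact hq₂.not_ge (hf hxq.le)
  have hd' : DenseRange fun q : ℚ => f' q := by simpa only [h] using hd
  exact funext fun x =>
    (le_of_agree hf hf' h hd x).antisymm (le_of_agree hf' hf (fun q => (h q).symm) hd' x)

namespace OrderIso

noncomputable def extendRat (u : ℚ ≃o ℚ) (x : ℝ) : ℝ :=
  sSup ((fun q : ℚ => (u q : ℝ)) '' {q | (q : ℝ) < x})

variable (u v : ℚ ≃o ℚ)

theorem bddAbove_extendRat_set (x : ℝ) :
    BddAbove ((fun q : ℚ => (u q : ℝ)) '' {q | (q : ℝ) < x}) := by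
  obtain ⟨r, hr⟩ := exists_rat_gt x
  refine ⟨u r, ?_⟩
  rintro _ ⟨q, hq : (q : ℝ) < x, rfl⟩
  exact Rat.cast_le.2 (u.monotone (show q ≤ r by exact_mod_cast (hq.trans hr).le))

theorem nonempty_extendRat_set (x : ℝ) :
    ((fun q : ℚ => (u q : ℝ)) '' {q | (q : ℝ) < x}).Nonempty := by
  obtain ⟨q, hq⟩ := exists_rat_lt x
  exact ⟨u q, q, hq, rfl⟩

theorem monotone_extendRat : Monotone (extendRat u) := fun x y hxy =>
  csSup_le_csSup (u.bddAbove_extendRat_set y) (u.nonempty_extendRat_set x)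
    (image_mono fun _ hq => lt_of_lt_of_le hq hxy)

theorem extendRat_ratCast (q : ℚ) : extendRat u q = u q := by
  apply le_antisymm
  · refine csSup_le (u.nonempty_extendRat_set q) ?_
    rintro _ ⟨r, hr : (r : ℝ) < q, rfl⟩
    exact Rat.cast_le.2 (u.monotone (show r ≤ q by exact_mod_cast hr.le))
  · refine le_of_forall_rat_lt_imp_le fun s hs => le_csSup (u.bddAbove_extendRat_set q) ?_
    refine ⟨u.symm s, ?_, by simp⟩
    have : u.symm s < q := by simpa using u.symm.strictMono (by exact_mod_cast hs : s < u q)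
    exact_mod_cast this

theorem denseRange_ratCast_comp : DenseRange fun q : ℚ => (u q : ℝ) := by
  rw [DenseRange, show (fun q : ℚ => (u q : ℝ)) = ((↑) : ℚ → ℝ) ∘ u from rfl,
    u.surjective.range_comp]
  exact Rat.denseRange_cast

theorem extendRat_eq_of_monotone {f : ℝ → ℝ} (hf : Monotone f) (h : ∀ q : ℚ, f q = u q) :
    extendRat u = f :=
  (monotone_extendRat u).eq_of_forall_rat_eq hf (fun q => by rw [h, extendRat_ratCast])
    (by simpa only [extendRat_ratCast] using u.denseRange_ratCast_comp)

theorem extendRat_one : extendRat 1 = id :=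
  extendRat_eq_of_monotone 1 monotone_id fun _ => rfl

theorem extendRat_mul : extendRat (u * v) = extendRat u ∘ extendRat v :=
  extendRat_eq_of_monotone _ (u.monotone_extendRat.comp v.monotone_extendRat)
    fun q => by simp [extendRat_ratCast]

noncomputable def extendRatHom : (ℚ ≃o ℚ) →* (ℝ ≃o ℝ) where
  toFun u := Equiv.toOrderIso
    { toFun := extendRat u
      invFun := extendRat u⁻¹
      left_inv := fun x => by
        simpa [extendRat_one] using (congrFun (extendRat_mul u⁻¹ u) x).symm
      right_inv := fun x => by
        simpa [extendRat_one] using (congrFun (extendRat_mul u u⁻¹) x).symm }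
    u.monotone_extendRat u⁻¹.monotone_extendRat
  map_one' := ext extendRat_one
  map_mul' u v := ext (extendRat_mul u v)

theorem extendRatHom_injective : Function.Injective extendRatHom := fun u v h =>
  ext <| funext fun q => by
    simpa [extendRatHom, extendRat_ratCast] using DFunLike.congr_fun h (q : ℝ)

def prodLexLeftHom (α β : Type*) [Preorder α] [Preorder β] :
    (α ≃o α) →* (α ×ₗ β ≃o α ×ₗ β) where
  toFun u := Prod.Lex.prodLexCongr u (refl β)
  map_one' := rfl
  map_mul' _ _ := rfl

theorem prodLexLeftHom_injective (α β : Type*) [Preorder α] [Preorder β] [Nonempty β] :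
    Function.Injective (prodLexLeftHom α β) := fun u v h => ext <| funext fun a => by
  obtain ⟨b⟩ := ‹Nonempty β›
  exact congrArg (fun p => (ofLex p).1) (DFunLike.congr_fun h (toLex (a, b)))

def autCongr {α β : Type*} [Preorder α] [Preorder β] (e : α ≃o β) : (α ≃o α) ≃* (β ≃o β) where
  toFun u := (e.symm.trans u).trans e
  invFun w := (e.trans w).trans e.symm
  left_inv u := ext <| funext fun a => by simp
  right_inv w := ext <| funext fun b => by simp
  map_mul' u v := ext <| funext fun b => by simp [RelIso.mul_apply]

end OrderIso

def HomeoPlusReal.ofOrderIso : (ℝ ≃o ℝ) →* HomeoPlusReal where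
  toFun e := ⟨e.toEquiv, e.continuous, e.symm.continuous, e.strictMono⟩
  map_one' := rfl
  map_mul' _ _ := rfl

theorem HomeoPlusReal.ofOrderIso_injective : Function.Injective HomeoPlusReal.ofOrderIso :=
  fun _ _ h => OrderIso.ext <| funext fun x =>
    Equiv.congr_fun (congrArg Subtype.val h) x

theorem exists_hom_homeoPlusReal_of_orderIso {G X : Type*} [Group G] [LinearOrder X]
    [Countable X] (ρ : G →* (X ≃o X)) {g₀ : G} (hg₀ : ρ g₀ ≠ 1) :
    ∃ ψ : G →* HomeoPlusReal, ψ g₀ ≠ 1 := by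
  obtain ⟨x, -⟩ := DFunLike.ne_iff.mp hg₀
  have : Nonempty X := ⟨x⟩
  have : Countable (X ×ₗ ℚ) := Countable.of_equiv (X × ℚ) toLex
  obtain ⟨e⟩ := Order.iso_of_countable_dense (X ×ₗ ℚ) ℚ
  let ι := HomeoPlusReal.ofOrderIso.comp <| OrderIso.extendRatHom.comp <|
    (OrderIso.autCongr e).toMonoidHom.comp (OrderIso.prodLexLeftHom X ℚ)
  have hι : Function.Injective ι := HomeoPlusReal.ofOrderIso_injective.comp <|
    OrderIso.extendRatHom_injective.comp <| (OrderIso.autCongr e).injective.comp <|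
      OrderIso.prodLexLeftHom_injective X ℚ
  exact ⟨ι.comp ρ, fun h => hg₀ ((map_eq_one_iff ι hι).1 h)⟩

section LeftInvariant

variable {G L : Type*} [Group G]

/-- `g` sends `T h` to `T (g * h)`; by `rangeSMul_mk` the chosen `h` is irrelevant once `T` is
left-invariant. -/
noncomputable def rangeSMul (T : G → L) (g : G) (x : range T) : range T :=
  ⟨T (g * x.2.choose), mem_range_self _⟩

variable {T : G → L}

theorem rangeSMul_one (x : range T) : rangeSMul T 1 x = x :=
  Subtype.ext <| (congrArg T (one_mul _)).trans x.2.choose_spec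

variable [LinearOrder L]

theorem rangeSMul_mk (hT : ∀ g h h', T h ≤ T h' → T (g * h) ≤ T (g * h')) (g h : G) :
    rangeSMul T g ⟨T h, mem_range_self h⟩ = ⟨T (g * h), mem_range_self _⟩ := by
  have hrep : T (Exists.choose (mem_range_self (f := T) h)) = T h :=
    (mem_range_self h).choose_spec
  exact Subtype.ext <| (hT g _ _ hrep.le).antisymm (hT g _ _ hrep.ge)

theorem rangeSMul_mul (hT : ∀ g h h', T h ≤ T h' → T (g * h) ≤ T (g * h')) (g g' : G)
    (x : range T) : rangeSMul T (g * g') x = rangeSMul T g (rangeSMul T g' x) := by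
  obtain ⟨_, h, rfl⟩ := x
  simp only [rangeSMul_mk hT, mul_assoc]

theorem monotone_rangeSMul (hT : ∀ g h h', T h ≤ T h' → T (g * h) ≤ T (g * h')) (g : G) :
    Monotone (rangeSMul T g) := by
  rintro ⟨_, h, rfl⟩ ⟨_, h', rfl⟩ hle
  simp only [rangeSMul_mk hT, Subtype.mk_le_mk]
  exact hT g h h' hle

noncomputable def rangeAction (hT : ∀ g h h', T h ≤ T h' → T (g * h) ≤ T (g * h')) :
    G →* (range T ≃o range T) where
  toFun g := Equiv.toOrderIso
    { toFun := rangeSMul T g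
      invFun := rangeSMul T g⁻¹
      left_inv := fun x => by rw [← rangeSMul_mul hT, inv_mul_cancel, rangeSMul_one]
      right_inv := fun x => by rw [← rangeSMul_mul hT, mul_inv_cancel, rangeSMul_one] }
    (monotone_rangeSMul hT g) (monotone_rangeSMul hT g⁻¹)
  map_one' := OrderIso.ext <| funext rangeSMul_one
  map_mul' g g' := OrderIso.ext <| funext <| rangeSMul_mul hT g g'

theorem exists_hom_homeoPlusReal_of_leftInvariant [Countable G]
    (hT : ∀ g h h', T h ≤ T h' → T (g * h) ≤ T (g * h')) {g₀ : G} (hg₀ : T g₀ ≠ T 1) :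
    ∃ ψ : G →* HomeoPlusReal, ψ g₀ ≠ 1 := by
  have : Countable (range T) := (countable_range T).to_subtype
  refine exists_hom_homeoPlusReal_of_orderIso (rangeAction hT) fun h => hg₀ ?_
  have := congrArg Subtype.val (DFunLike.congr_fun h ⟨T 1, mem_range_self 1⟩)
  simpa [rangeAction, rangeSMul_mk hT] using this

end LeftInvariant

namespace LocalHomeoAtZero

theorem U_mem_nhds (d : LocalHomeoAtZero) : d.U ∈ 𝓝 (0 : ℝ) := d.isOpen_U.mem_nhds d.mem_U

theorem tendsto_F (d : LocalHomeoAtZero) : Tendsto d.F (𝓝 0) (𝓝 0) := by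
  simpa only [d.fixes] using (d.contF.continuousAt d.U_mem_nhds).tendsto

end LocalHomeoAtZero

namespace GermHomeoPlus

def germAlong (l : Filter ℝ) (hl : l ≤ 𝓝 0) : GermHomeoPlus → Germ l ℝ :=
  Quotient.lift (fun d => (d.F : Germ l ℝ)) fun _ _ h => Germ.coe_eq.2 (h.filter_mono hl)

theorem germAlong_mul_le_mul {l : Filter ℝ} (hl : l ≤ 𝓝 0) (a : GermHomeoPlus)
    {b c : GermHomeoPlus} (h : germAlong l hl b ≤ germAlong l hl c) :
    germAlong l hl (a * b) ≤ germAlong l hl (a * c) := by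
  obtain ⟨d, rfl⟩ := Quotient.exists_rep a
  obtain ⟨e, rfl⟩ := Quotient.exists_rep b
  obtain ⟨e', rfl⟩ := Quotient.exists_rep c
  have hmaps : ∀ f : LocalHomeoAtZero, ∀ᶠ x in l, f.F x ∈ d.U :=
    fun f => hl (f.tendsto_F d.U_mem_nhds)
  refine Germ.coe_le.2 ?_
  filter_upwards [Germ.coe_le.1 h, hmaps e, hmaps e'] with x hx he he'
  exact d.mono.monotoneOn he he' hx

theorem exists_ultrafilter_germAlong_ne {a : GermHomeoPlus} (ha : a ≠ 1) :
    ∃ (U : Ultrafilter ℝ) (hU : (U : Filter ℝ) ≤ 𝓝 0), germAlong U hU a ≠ germAlong U hU 1 := by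
  obtain ⟨d, rfl⟩ := Quotient.exists_rep a
  have hmoves : ∃ᶠ x in 𝓝 0, d.F x ≠ x := fun h =>
    ha (Quotient.sound (h.mono fun _ => not_not.1 : d.F =ᶠ[𝓝 0] LocalHomeoAtZero.one.F))
  have := frequently_iff_neBot.1 hmoves
  have hle := Ultrafilter.of_le (𝓝 0 ⊓ 𝓟 {x | d.F x ≠ x})
  refine ⟨Ultrafilter.of _, hle.trans inf_le_left, fun h => ?_⟩
  obtain ⟨x, hfix, hmove⟩ :=
    ((Germ.coe_eq.1 h).and (hle (mem_inf_of_right (mem_principal_self _)))).exists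
  exact hmove hfix

end GermHomeoPlus

/-- If a countable group `G` admits a homomorphism with nontrivial image into
the group `Homeo̰₊(ℝ, 0)` of germs at `0` of orientation-preserving
homeomorphisms of `ℝ` fixing `0`, then it admits a homomorphism with nontrivial
image into `Homeo₊(ℝ)`. -/
theorem exists_nontrivial_hom_homeoPlus_of_germ {G : Type*} [Group G] [Countable G]
    (h : ∃ φ : G →* GermHomeoPlus, ∃ g : G, φ g ≠ 1) :
    ∃ ψ : G →* HomeoPlusReal, ∃ g : G, ψ g ≠ 1 := by
  obtain ⟨φ, g₀, hg₀⟩ := h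
  obtain ⟨U, hU, hne⟩ := GermHomeoPlus.exists_ultrafilter_germAlong_ne hg₀
  let T g := GermHomeoPlus.germAlong U hU (φ g)
  have hT : ∀ g h h', T h ≤ T h' → T (g * h) ≤ T (g * h') := fun g _ _ hle => by
    simpa only [T, map_mul] using GermHomeoPlus.germAlong_mul_le_mul hU (φ g) hle
  obtain ⟨ψ, hψ⟩ := exists_hom_homeoPlusReal_of_leftInvariant hT (by simpa only [T, map_one])
  exact ⟨ψ, g₀, hψ⟩
end

section
/- Let G be a countable group with a left-invariant linear order ≺. Then there exists an injective map t : G → ℝ that is strictly order-preserving (g ≺ h implies t(g) < t(h)), and moreover if G contains an element g with e ≺ g then the image t(G) is unbounded above in ℝ. -/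
open Filter Topology Set


/-- For a countable group `G` with a left-invariant linear order, there is a
strictly order-preserving injection `t : G → ℝ`; moreover, if some element is
greater than the identity, then the image of `t` is unbounded above. -/
theorem exists_orderPreserving_embedding_into_real {G : Type*} [Group G]
    [Countable G] (r : LinearOrder G)
    (hr : ∀ f g h : G, r.lt g h → r.lt (f * g) (f * h)) :
    ∃ t : G → ℝ, Function.Injective t ∧ (∀ g h : G, r.lt g h → t g < t h) ∧
      ((∃ g : G, r.lt 1 g) → ∀ M : ℝ, ∃ g : G, M < t g) := by
  classical
  letI := r
  obtain ⟨f⟩ : Nonempty (G ↪o ℚ) := Order.embedding_from_countable_to_dense G ℚ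
  by_cases hex : ∃ g : G, r.lt 1 g
  · obtain ⟨g, hg⟩ := hex
    have hxg : ∀ x : G, x < x * g := by
      intro x
      have := hr x 1 g hg
      simpa using this
    haveI : Nonempty G := ⟨1⟩
    obtain ⟨a, ha⟩ := exists_surjective_nat G
    -- cofinal strictly increasing sequence
    let c : ℕ → G := fun n => Nat.rec (a 0 * g) (fun n cn => max cn (a (n + 1)) * g) n
    have hc0 : c 0 = a 0 * g := rfl
    have hcs : ∀ n, c (n + 1) = max (c n) (a (n + 1)) * g := fun n => rfl
    have hcmono : StrictMono c := by
      apply strictMono_nat_of_lt_succ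
      intro n
      rw [hcs]
      exact lt_of_le_of_lt (le_max_left _ _) (hxg _)
    have hcof : ∀ n, a n < c n := by
      intro n
      cases n with
      | zero => rw [hc0]; exact hxg _
      | succ n =>
        rw [hcs]
        exact lt_of_le_of_lt (le_max_right _ _) (hxg _)
    have hex' : ∀ x : G, ∃ n, x < c n := by
      intro x
      obtain ⟨n, rfl⟩ := ha x
      exact ⟨n, hcof n⟩
    haveI : ∀ x : G, DecidablePred fun n => x < c n := fun x n => Classical.dec _
    set t : G → ℝ := fun x => Real.arctan (f x) + ((@Nat.find _ (fun _ => Classical.dec _) (hex' x)) : ℝ) with ht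
    have hmono : ∀ x y : G, x < y → t x < t y := by
      intro x y hxy
      have h1 : Real.arctan (f x) < Real.arctan (f y) :=
        Real.arctan_strictMono (by exact_mod_cast f.lt_iff_lt.2 hxy)
      have h2 : (@Nat.find _ (fun _ => Classical.dec _) (hex' x)) ≤ (@Nat.find _ (fun _ => Classical.dec _) (hex' y)) :=
        @Nat.find_mono _ _ (fun _ => Classical.dec _) (fun _ => Classical.dec _)
          (fun n hn => lt_trans hxy hn) (hex' x) (hex' y)
      exact add_lt_add_of_lt_of_le h1 (by exact_mod_cast h2)
    refine ⟨t, ?_, hmono, ?_⟩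
    · intro x y hxy
      rcases lt_trichotomy x y with h' | h' | h'
      · exact absurd hxy (ne_of_lt (hmono x y h'))
      · exact h'
      · exact absurd hxy.symm (ne_of_lt (hmono y x h'))
    · intro _ M
      obtain ⟨n, hn⟩ := exists_nat_gt (M + Real.pi / 2)
      refine ⟨c n, ?_⟩
      have h1 : -(Real.pi / 2) < Real.arctan (f (c n)) := Real.neg_pi_div_two_lt_arctan _
      have h2 : (n : ℝ) ≤ ((@Nat.find _ (fun _ => Classical.dec _) (hex' (c n))) : ℝ) := by
        have : n ≤ (@Nat.find _ (fun _ => Classical.dec _) (hex' (c n))) := by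
          by_contra hlt
          push_neg at hlt
          have := @Nat.find_spec _ (fun _ => Classical.dec _) (hex' (c n))
          exact absurd this (not_lt_of_ge (le_of_lt (hcmono hlt)))
        exact_mod_cast this
      have : M < -(Real.pi / 2) + (n : ℝ) := by linarith
      calc M < -(Real.pi / 2) + (n : ℝ) := this
        _ ≤ Real.arctan (f (c n)) + ((@Nat.find _ (fun _ => Classical.dec _) (hex' (c n))) : ℝ) :=
          add_le_add h1.le h2
        _ = t (c n) := rfl
  · refine ⟨fun x => Real.arctan (f x), ?_, ?_, fun h => absurd h hex⟩
    · intro x y hxy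
      have := Real.arctan_injective hxy
      exact f.injective (by exact_mod_cast this)
    · intro x y hxy
      exact Real.arctan_strictMono (by exact_mod_cast f.lt_iff_lt.2 hxy)
end
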